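/- Define g₁ : [0, π) → ℝ by g₁(0) = 1/4 and g₁(x) = (cosh(x/2) - cos(x/2))/x² for x ≠ 0, so that g₁(x) = Σ_{k=0}^{∞} a_k x^{4k} with a_k = 1/(2^{4k+1}(4k+2)!). For n ∈ ℕ let T_{4n}(x) = Σ_{k=0}^{n} a_k x^{4k}, and for c ∈ (0, π) and m ≥ 1 let 𝕋_{4m}(x) = Σ_{k=0}^{m-1} a_k x^{4k} + (g₁(c) - Σ_{k=0}^{m-1} a_k c^{4k})·(x/c)^{4m}, with 𝕋_0(x) = g₁(c). Then for every c ∈ (0, π), every x ∈ (0, c), and all m, n ∈ ℕ: 1/4 = T_0(x) ≤ T_{4n}(x) ≤ T_{4n+4}(x) ≤ g₁(x) ≤ 𝕋_{4m+4}(x) ≤ 𝕋_{4m}(x) ≤ 𝕋_0(x) = g₁(c). -/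

import Mathlib

open Real Set

noncomputable def g1 (x : ℝ) : ℝ :=
  if x = 0 then 1 / 4 else (Real.cosh (x / 2) - Real.cos (x / 2)) / x ^ 2

/-- Maclaurin coefficients of `g₁`: `a_k = 1/(2^{4k+1}(4k+2)!)`. -/
noncomputable def acoef (k : ℕ) : ℝ := 1 / (2 ^ (4 * k + 1) * (Nat.factorial (4 * k + 2) : ℝ))

/-- First Taylor approximation `T_{4n}(x) = Σ_{k=0}^n a_k x^{4k}`. -/
noncomputable def T (n : ℕ) (x : ℝ) : ℝ := ∑ k ∈ Finset.range (n + 1), acoef k * x ^ (4 * k)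

/-- Second Taylor approximation `𝕋_{4m}(x) = Σ_{k=0}^{m-1} a_k x^{4k} +
(g₁(c) - Σ_{k=0}^{m-1} a_k c^{4k})·(x/c)^{4m}`, with `𝕋_0(x) = g₁(c)`
(the formula specializes to this at `m = 0`). -/
noncomputable def TT (c : ℝ) (m : ℕ) (x : ℝ) : ℝ :=
  (∑ k ∈ Finset.range m, acoef k * x ^ (4 * k)) +
    (g1 c - ∑ k ∈ Finset.range m, acoef k * c ^ (4 * k)) * (x / c) ^ (4 * m)

/-!
In the variable `y = x⁴`, `g₁` is a power series `Σ aₖ yᵏ` with nonnegative coefficients, so its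
partial sums increase to it. For the second approximations put `z = c⁴ ≥ y`: termwise
`aₖ yᵏ ≤ aₖ zᵏ (y/z)ᵐ` for `k ≥ m`, so the tail of the series at `y` is at most `(y/z)ᵐ` times the
tail at `z`, which is `g₁ ≤ 𝕋_{4m}`; and `𝕋_{4m} - 𝕋_{4m+4} = Rₘ₊₁ ((y/z)ᵐ - (y/z)ᵐ⁺¹) ≥ 0`,
where `Rₘ₊₁ ≥ 0` is the tail at `z` after `m + 1` terms.
-/

noncomputable def secondTaylor (a : ℕ → ℝ) (G z : ℝ) (m : ℕ) (y : ℝ) : ℝ :=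
  (∑ k ∈ Finset.range m, a k * y ^ k) + (G - ∑ k ∈ Finset.range m, a k * z ^ k) * (y / z) ^ m

section secondTaylor

variable {a : ℕ → ℝ} {y z F G : ℝ}

lemma mul_div_cancel_of_nonneg_of_le (hy : 0 ≤ y) (hyz : y ≤ z) : z * (y / z) = y :=
  mul_div_cancel_of_imp' fun hz => le_antisymm (hz ▸ hyz) hy

lemma le_secondTaylor (hF : HasSum (fun k => a k * y ^ k) F)
    (hG : HasSum (fun k => a k * z ^ k) G) (ha : ∀ k, 0 ≤ a k) (hy : 0 ≤ y) (hyz : y ≤ z)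
    (m : ℕ) : F ≤ secondTaylor a G z m y := by
  have hFtail := (hasSum_nat_add_iff' m).mpr hF
  have hGtail := ((hasSum_nat_add_iff' m).mpr hG).mul_right ((y / z) ^ m)
  have htail := hasSum_le (fun i => ?_) hFtail hGtail
  · rw [secondTaylor]
    linarith
  calc a (i + m) * y ^ (i + m) = a (i + m) * y ^ i * y ^ m := by ring
    _ ≤ a (i + m) * z ^ i * y ^ m := by gcongr; exact ha _
    _ = a (i + m) * z ^ i * (z * (y / z)) ^ m := by rw [mul_div_cancel_of_nonneg_of_le hy hyz]
    _ = a (i + m) * z ^ (i + m) * (y / z) ^ m := by ring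

lemma secondTaylor_succ_le (hG : HasSum (fun k => a k * z ^ k) G) (ha : ∀ k, 0 ≤ a k)
    (hy : 0 ≤ y) (hyz : y ≤ z) (m : ℕ) :
    secondTaylor a G z (m + 1) y ≤ secondTaylor a G z m y := by
  have hz : 0 ≤ z := hy.trans hyz
  have hrem : 0 ≤ G - ∑ k ∈ Finset.range (m + 1), a k * z ^ k :=
    sub_nonneg.mpr (sum_le_hasSum _ (fun k _ => mul_nonneg (ha k) (pow_nonneg hz k)) hG)
  have hratio : (y / z) ^ (m + 1) ≤ (y / z) ^ m :=
    pow_le_pow_of_le_one (div_nonneg hy hz) (div_le_one_of_le₀ hyz hz) m.le_succ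
  have hym : y ^ m = z ^ m * (y / z) ^ m := by
    rw [← mul_pow, mul_div_cancel_of_nonneg_of_le hy hyz]
  calc secondTaylor a G z (m + 1) y
    _ ≤ (∑ k ∈ Finset.range (m + 1), a k * y ^ k)
        + (G - ∑ k ∈ Finset.range (m + 1), a k * z ^ k) * (y / z) ^ m := by
      rw [secondTaylor]; gcongr
    _ = secondTaylor a G z m y := by
      rw [secondTaylor, Finset.sum_range_succ, Finset.sum_range_succ, hym]; ring

lemma secondTaylor_antitone (hG : HasSum (fun k => a k * z ^ k) G) (ha : ∀ k, 0 ≤ a k)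
    (hy : 0 ≤ y) (hyz : y ≤ z) : Antitone fun m => secondTaylor a G z m y :=
  antitone_nat_of_succ_le (secondTaylor_succ_le hG ha hy hyz)

end secondTaylor

lemma acoef_nonneg (k : ℕ) : 0 ≤ acoef k := by
  unfold acoef; positivity

lemma acoef_zero : acoef 0 = 1 / 4 := by
  norm_num [acoef]

lemma hasSum_cosh_sub_cos (t : ℝ) :
    HasSum (fun k : ℕ => 2 * t ^ (4 * k + 2) / (4 * k + 2).factorial) (cosh t - cos t) := by
  set f : ℕ → ℝ := fun n =>
    t ^ (2 * n) / (2 * n).factorial - (-1) ^ n * t ^ (2 * n) / (2 * n).factorial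
  have hf : HasSum f (cosh t - cos t) := (hasSum_cosh t).sub (hasSum_cos t)
  have hodd : Function.Injective fun k : ℕ => 2 * k + 1 := fun a b h => by simp_all
  have heven : ∀ n ∉ Set.range fun k : ℕ => 2 * k + 1, f n = 0 := by
    intro n hn
    obtain ⟨k, rfl⟩ : Even n :=
      Nat.not_odd_iff_even.mp fun ⟨k, hk⟩ => hn ⟨k, hk.symm⟩
    simp [f, ← two_mul, pow_mul]
  convert (hodd.hasSum_iff heven).mpr hf using 1
  ext k
  simp only [f, Function.comp, pow_succ, pow_mul]
  ring_nf

lemma hasSum_g1 (x : ℝ) : HasSum (fun k => acoef k * (x ^ 4) ^ k) (g1 x) := by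
  by_cases hx : x = 0
  · subst hx
    convert hasSum_single (f := fun k => acoef k * ((0 : ℝ) ^ 4) ^ k) 0
      fun k hk => by simp [hk] using 1
    simp [g1, acoef_zero]
  rw [g1, if_neg hx]
  have hterm (k : ℕ) : acoef k * (x ^ 4) ^ k
      = 2 * (x / 2) ^ (4 * k + 2) / (4 * k + 2).factorial / x ^ 2 := by
    rw [acoef, ← pow_mul, div_pow]
    field_simp
    ring
  simpa only [hterm] using (hasSum_cosh_sub_cos (x / 2)).div_const (x ^ 2)

lemma T_eq_sum (n : ℕ) (x : ℝ) :
    T n x = ∑ k ∈ Finset.range (n + 1), acoef k * (x ^ 4) ^ k := by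
  simp only [T, pow_mul]

lemma TT_eq_secondTaylor (c : ℝ) (m : ℕ) (x : ℝ) :
    TT c m x = secondTaylor acoef (g1 c) (c ^ 4) m (x ^ 4) := by
  simp only [TT, secondTaylor, pow_mul, div_pow]

lemma T_mono (x : ℝ) : Monotone fun n => T n x := fun _ _ hmn => by
  simp only [T_eq_sum]
  exact Finset.sum_le_sum_of_subset_of_nonneg (Finset.range_subset_range.mpr (by omega))
    fun k _ _ => mul_nonneg (acoef_nonneg k) (by positivity)

lemma T_le_g1 (n : ℕ) (x : ℝ) : T n x ≤ g1 x := by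
  rw [T_eq_sum]
  exact sum_le_hasSum _ (fun k _ => mul_nonneg (acoef_nonneg k) (by positivity)) (hasSum_g1 x)

theorem g1_double_sided_taylor_general (c : ℝ)
    (x : ℝ) (hx : x ∈ Ioo 0 c) (m n : ℕ) :
    1 / 4 = T 0 x ∧
    T 0 x ≤ T n x ∧
    T n x ≤ T (n + 1) x ∧
    T (n + 1) x ≤ g1 x ∧
    g1 x ≤ TT c (m + 1) x ∧
    TT c (m + 1) x ≤ TT c m x ∧
    TT c m x ≤ TT c 0 x ∧
    TT c 0 x = g1 c := by
  have hy : 0 ≤ x ^ 4 := by positivity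
  have hyz : x ^ 4 ≤ c ^ 4 := pow_le_pow_left₀ hx.1.le hx.2.le 4
  have hTT := secondTaylor_antitone (hasSum_g1 c) acoef_nonneg hy hyz
  simp only [TT_eq_secondTaylor] at hTT ⊢
  refine ⟨by simp [T, acoef_zero], T_mono x n.zero_le, T_mono x n.le_succ, T_le_g1 _ x,
    le_secondTaylor (hasSum_g1 x) (hasSum_g1 c) acoef_nonneg hy hyz _, hTT m.le_succ,
    hTT m.zero_le, by simp [secondTaylor]⟩

theorem g1_double_sided_taylor (c : ℝ) (hc : c ∈ Ioo 0 π)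
    (x : ℝ) (hx : x ∈ Ioo 0 c) (m n : ℕ) :
    1 / 4 = T 0 x ∧
    T 0 x ≤ T n x ∧
    T n x ≤ T (n + 1) x ∧
    T (n + 1) x ≤ g1 x ∧
    g1 x ≤ TT c (m + 1) x ∧
    TT c (m + 1) x ≤ TT c m x ∧
    TT c m x ≤ TT c 0 x ∧
    TT c 0 x = g1 c :=
  g1_double_sided_taylor_general c x hx m n
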